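/- Assume that A⋈^{f,g}(𝔟,𝔠) is a Gaussian local ring. If 𝔟² = 0 and f is surjective, then f(a)𝔟 ⊆ f(a²)B for every a ∈ A (i.e., for every a ∈ A and every b ∈ 𝔟, the element f(a)b lies in the principal ideal of B generated by f(a²)). -/

import Mathlib

/-- The bi-amalgamation of `A` with `(B, C)` along `(𝔟, 𝔠)` with respect to `(f, g)`:
the subring `{(f a + β, g a + γ) | a ∈ A, β ∈ 𝔟, γ ∈ 𝔠}` of `B × C`. -/
def biAmalgamation {A B C : Type*} [CommRing A] [CommRing B] [CommRing C]
    (f : A →+* B) (g : A →+* C) (𝔟 : Ideal B) (𝔠 : Ideal C) : Subring (B × C) where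
  carrier := {x | ∃ a β γ, β ∈ 𝔟 ∧ γ ∈ 𝔠 ∧ x = (f a + β, g a + γ)}
  one_mem' := ⟨1, 0, 0, 𝔟.zero_mem, 𝔠.zero_mem, by ext <;> simp⟩
  zero_mem' := ⟨0, 0, 0, 𝔟.zero_mem, 𝔠.zero_mem, by ext <;> simp⟩
  add_mem' := by
    rintro x y ⟨a₁, β₁, γ₁, hβ₁, hγ₁, rfl⟩ ⟨a₂, β₂, γ₂, hβ₂, hγ₂, rfl⟩
    exact ⟨a₁ + a₂, β₁ + β₂, γ₁ + γ₂, 𝔟.add_mem hβ₁ hβ₂, 𝔠.add_mem hγ₁ hγ₂, by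
      simp only [Prod.ext_iff, map_add, Prod.fst_add, Prod.snd_add]
      constructor <;> ring⟩
  neg_mem' := by
    rintro x ⟨a, β, γ, hβ, hγ, rfl⟩
    exact ⟨-a, -β, -γ, 𝔟.neg_mem hβ, 𝔠.neg_mem hγ, by
      simp only [Prod.ext_iff, map_neg, Prod.fst_neg, Prod.snd_neg]
      constructor <;> ring⟩
  mul_mem' := by
    rintro x y ⟨a₁, β₁, γ₁, hβ₁, hγ₁, rfl⟩ ⟨a₂, β₂, γ₂, hβ₂, hγ₂, rfl⟩
    refine ⟨a₁ * a₂, f a₁ * β₂ + β₁ * f a₂ + β₁ * β₂,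
      g a₁ * γ₂ + γ₁ * g a₂ + γ₁ * γ₂,
      𝔟.add_mem (𝔟.add_mem (Ideal.mul_mem_left _ _ hβ₂) (Ideal.mul_mem_right _ _ hβ₁))
        (Ideal.mul_mem_right _ _ hβ₁),
      𝔠.add_mem (𝔠.add_mem (Ideal.mul_mem_left _ _ hγ₂) (Ideal.mul_mem_right _ _ hγ₁))
        (Ideal.mul_mem_right _ _ hγ₁), by
      simp only [Prod.ext_iff, map_mul, Prod.fst_mul, Prod.snd_mul]
      constructor <;> ring⟩

/-- The content ideal of a polynomial: the ideal generated by its coefficients. -/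
def contentIdeal {R : Type*} [CommRing R] (p : Polynomial R) : Ideal R :=
  Ideal.span (Set.range p.coeff)

/-- A commutative ring is Gaussian if the content ideal is multiplicative:
`c(pq) = c(p)c(q)` for all polynomials `p, q`. -/
def IsGaussianRing (R : Type*) [CommRing R] : Prop :=
  ∀ p q : Polynomial R, contentIdeal (p * q) = contentIdeal p * contentIdeal q

/-- If `A ⋈^{f,g} (𝔟,𝔠)` is a Gaussian local ring, `𝔟² = 0` and `f` is surjective, then
`f(a)𝔟 ⊆ f(a²)B` for every `a ∈ A`. -/
theorem biAmalgamation_gaussian_mul_mem {A B C : Type*} [CommRing A] [CommRing B] [CommRing C]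
    (f : A →+* B) (g : A →+* C) (𝔟 : Ideal B) (𝔠 : Ideal C)
    (hcomp : 𝔟.comap f = 𝔠.comap g)
    (hG : IsGaussianRing ↥(biAmalgamation f g 𝔟 𝔠))
    (hloc : IsLocalRing ↥(biAmalgamation f g 𝔟 𝔠))
    (hb : 𝔟 ^ 2 = ⊥) (hfsurj : Function.Surjective f) :
    ∀ a : A, ∀ x ∈ 𝔟, f a * x ∈ Ideal.span {f (a ^ 2)} := by
  intro a x hx
  set R := biAmalgamation f g 𝔟 𝔠 with hR
  have hu : ((f a, g a) : B × C) ∈ R := ⟨a, 0, 0, 𝔟.zero_mem, 𝔠.zero_mem, by simp⟩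
  have hv : ((x, 0) : B × C) ∈ R := ⟨0, x, 0, hx, 𝔠.zero_mem, by simp⟩
  set u : R := ⟨_, hu⟩ with hu'
  set v : R := ⟨_, hv⟩ with hv'
  have hx2 : x * x = 0 := by
    have h : x * x ∈ 𝔟 ^ 2 := by rw [sq]; exact Ideal.mul_mem_mul hx hx
    simpa [hb] using h
  have hv2 : v * v = 0 := by
    apply Subtype.ext
    show ((x, 0) : B × C) * (x, 0) = 0
    simp [Prod.ext_iff, hx2]
  set p : Polynomial R := Polynomial.C u * Polynomial.X + Polynomial.C v with hp
  set q : Polynomial R := Polynomial.C u * Polynomial.X - Polynomial.C v with hq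
  have hpq : p * q = Polynomial.C (u * u) * Polynomial.X ^ 2 := by
    have h : p * q = Polynomial.C u * Polynomial.C u * Polynomial.X ^ 2
        - Polynomial.C v * Polynomial.C v := by rw [hp, hq]; ring
    rw [h, ← Polynomial.C_mul, ← Polynomial.C_mul, hv2]
    simp
  have h1 : u ∈ contentIdeal p := by
    refine Ideal.subset_span ⟨1, ?_⟩
    simp [hp]
  have h2 : -v ∈ contentIdeal q := by
    refine Ideal.subset_span ⟨0, ?_⟩
    simp [hq]
  have hmul : u * (-v) ∈ contentIdeal (p * q) := by
    rw [hG p q]; exact Ideal.mul_mem_mul h1 h2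
  have hle : contentIdeal (p * q) ≤ Ideal.span {u * u} := by
    rw [hpq]
    refine Ideal.span_le.mpr ?_
    rintro _ ⟨n, rfl⟩
    simp only [Polynomial.coeff_C_mul, Polynomial.coeff_X_pow]
    by_cases hn : n = 2
    · simp [hn, Ideal.mem_span_singleton]
    · simp [hn]
  have key : u * v ∈ Ideal.span {u * u} := by
    have h := hle hmul
    have : -(u * v) ∈ Ideal.span {u * u} := by simpa using h
    simpa using (Ideal.span {u * u}).neg_mem this
  obtain ⟨r, hr⟩ := Ideal.mem_span_singleton.mp key
  have hfst := congrArg (fun z : R => (z : B × C).1) hr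
  have hfst' : f a * x = f a * f a * (r : B × C).1 := hfst
  refine Ideal.mem_span_singleton.mpr ⟨(r : B × C).1, ?_⟩
  rw [map_pow, sq, hfst']
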